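/- In the FG-A setting with bounded derivatives e_k^2 ≤ β and |c| ≤ C, the estimation variance Var[(∑_k e_k u_k) u_i · c] is bounded above by (1 + n_1)β C^2, i.e., it grows at most linearly in the number of hidden neurons n_1. -/

import Mathlib

open MeasureTheory ProbabilityTheory

open Real
open scoped ENNReal NNReal

-- integrability of x^m exp(-x^2/2) over ℝ
lemma gv_int (m : ℕ) :
    Integrable (fun x : ℝ => x ^ m * rexp (-x ^ 2 / 2)) := by
  have h := integrable_rpow_mul_exp_neg_mul_sq (show (0:ℝ) < 2⁻¹ by norm_num)
    (s := (m : ℝ)) (lt_of_lt_of_le (by norm_num) (Nat.cast_nonneg m))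
  refine h.congr (Filter.Eventually.of_forall fun x => ?_)
  simp only [Real.rpow_natCast]
  congr 1
  ring_nf

lemma gv_odd (m : ℕ) (hm : Odd m) :
    ∫ x : ℝ, x ^ m * rexp (-x ^ 2 / 2) = 0 := by
  have h := integral_neg_eq_self (fun x : ℝ => x ^ m * rexp (-x ^ 2 / 2)) volume
  simp only [hm.neg_pow, neg_sq, neg_mul] at h
  rw [integral_neg] at h
  linarith

lemma gv_Ioi (q : ℕ) :
    ∫ x in Set.Ioi (0:ℝ), x ^ q * rexp (-x ^ 2 / 2)
      = (2⁻¹ : ℝ) ^ (-((q:ℝ)+1)/2) * (1/2) * Real.Gamma (((q:ℝ)+1)/2) := by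
  rw [← integral_rpow_mul_exp_neg_mul_rpow (show (0:ℝ) < 2 by norm_num)
    (lt_of_lt_of_le (by norm_num) (Nat.cast_nonneg q)) (show (0:ℝ) < 2⁻¹ by norm_num)]
  refine setIntegral_congr_fun measurableSet_Ioi fun x hx => ?_
  rw [Real.rpow_natCast, show (2:ℝ) = ((2:ℕ):ℝ) by norm_num, Real.rpow_natCast]
  congr 1
  ring_nf

lemma gv_even (q : ℕ) (hq : Even q) :
    ∫ x : ℝ, x ^ q * rexp (-x ^ 2 / 2)
      = 2 * ∫ x in Set.Ioi (0:ℝ), x ^ q * rexp (-x ^ 2 / 2) := by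
  have h := integral_comp_abs (f := fun x : ℝ => x ^ q * rexp (-x ^ 2 / 2))
  simp only [hq.pow_abs, sq_abs] at h
  exact h

lemma gamma_3half : Real.Gamma (3/2) = √π / 2 := by
  rw [show (3:ℝ)/2 = 1/2 + 1 by norm_num, Real.Gamma_add_one (by norm_num),
    Real.Gamma_one_half_eq]
  ring

lemma gamma_5half : Real.Gamma (5/2) = 3 * √π / 4 := by
  rw [show (5:ℝ)/2 = 3/2 + 1 by norm_num, Real.Gamma_add_one (by norm_num), gamma_3half]
  ring

lemma rpow_half_inv (a : ℝ) : (2⁻¹ : ℝ) ^ (-a) = (2:ℝ) ^ a := by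
  rw [Real.inv_rpow (by norm_num : (0:ℝ) ≤ 2), ← Real.rpow_neg (by norm_num : (0:ℝ) ≤ 2),
    neg_neg]

lemma two_rpow_3half : (2:ℝ) ^ ((3:ℝ)/2) = 2 * √2 := by
  rw [show (3:ℝ)/2 = 1 + 1/2 by norm_num, Real.rpow_add (by norm_num), Real.rpow_one,
    ← Real.sqrt_eq_rpow]

lemma two_rpow_5half : (2:ℝ) ^ ((5:ℝ)/2) = 4 * √2 := by
  rw [show (5:ℝ)/2 = 2 + 1/2 by norm_num, Real.rpow_add (by norm_num),
    ← Real.sqrt_eq_rpow, show (2:ℝ) ^ (2:ℝ) = 4 by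
      rw [show (2:ℝ) = ((2:ℕ):ℝ) by norm_num, Real.rpow_natCast]; norm_num]

lemma gv2 : ∫ x : ℝ, x ^ 2 * rexp (-x ^ 2 / 2) = √2 * √π := by
  rw [gv_even 2 (by decide), gv_Ioi 2]
  norm_num
  rw [show (1:ℝ)/2 = 2⁻¹ by norm_num, show -((3:ℝ)/2) = -((3:ℝ)/2) from rfl,
    rpow_half_inv ((3:ℝ)/2), two_rpow_3half, gamma_3half]
  ring

lemma gv4 : ∫ x : ℝ, x ^ 4 * rexp (-x ^ 2 / 2) = 3 * (√2 * √π) := by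
  rw [gv_even 4 (by decide), gv_Ioi 4]
  norm_num
  rw [show (1:ℝ)/2 = 2⁻¹ by norm_num, rpow_half_inv ((5:ℝ)/2), two_rpow_5half, gamma_5half]
  ring

lemma gpdf_eq (x : ℝ) :
    gaussianPDFReal 0 1 x = (√2 * √π)⁻¹ * rexp (-x ^ 2 / 2) := by
  rw [gaussianPDFReal]
  norm_num

lemma gauss_withDensity :
    gaussianReal 0 1
      = (volume : Measure ℝ).withDensity
          (fun x => ((gaussianPDFReal 0 1 x).toNNReal : ℝ≥0∞)) := by
  rw [gaussianReal_of_var_ne_zero _ one_ne_zero]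
  rfl

lemma gpdf_meas : Measurable (fun x => (gaussianPDFReal 0 1 x).toNNReal) :=
  (measurable_gaussianPDFReal 0 1).real_toNNReal

lemma gauss_integral (g : ℝ → ℝ) :
    ∫ x, g x ∂(gaussianReal 0 1) = ∫ x, gaussianPDFReal 0 1 x * g x := by
  rw [gauss_withDensity, integral_withDensity_eq_integral_smul gpdf_meas g]
  congr 1
  funext x
  rw [NNReal.smul_def, Real.coe_toNNReal _ (gaussianPDFReal_nonneg 0 1 x), smul_eq_mul]

lemma gauss_integrable_iff (g : ℝ → ℝ) :
    Integrable g (gaussianReal 0 1)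
      ↔ Integrable (fun x => gaussianPDFReal 0 1 x * g x) volume := by
  rw [gauss_withDensity, integrable_withDensity_iff_integrable_smul gpdf_meas]
  constructor <;> intro h <;>
    refine h.congr (Filter.Eventually.of_forall fun x => ?_) <;>
    simp only [NNReal.smul_def, Real.coe_toNNReal _ (gaussianPDFReal_nonneg 0 1 x),
      smul_eq_mul]

lemma gauss_integrable_pow (m : ℕ) :
    Integrable (fun x : ℝ => x ^ m) (gaussianReal 0 1) := by
  rw [gauss_integrable_iff]
  refine (((gv_int m).const_mul ((√2 * √π)⁻¹)).congr
    (Filter.Eventually.of_forall fun x => ?_))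
  show (√2 * √π)⁻¹ * (x ^ m * rexp (-x ^ 2 / 2)) = gaussianPDFReal 0 1 x * x ^ m
  rw [gpdf_eq]
  ring

lemma gauss_moment (m : ℕ) :
    ∫ x, x ^ m ∂(gaussianReal 0 1)
      = (√2 * √π)⁻¹ * ∫ x : ℝ, x ^ m * rexp (-x ^ 2 / 2) := by
  rw [gauss_integral]
  rw [← integral_const_mul]
  congr 1
  funext x
  rw [gpdf_eq]
  ring

lemma gm1 : ∫ x, x ^ 1 ∂(gaussianReal 0 1) = 0 := by
  rw [gauss_moment, gv_odd 1 (by decide), mul_zero]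

lemma gm2 : ∫ x, x ^ 2 ∂(gaussianReal 0 1) = 1 := by
  have h : (√2 * √π) ≠ 0 := by positivity
  rw [gauss_moment, gv2, inv_mul_cancel₀ h]

lemma gm3 : ∫ x, x ^ 3 ∂(gaussianReal 0 1) = 0 := by
  rw [gauss_moment, gv_odd 3 (by decide), mul_zero]

lemma gm4 : ∫ x, x ^ 4 ∂(gaussianReal 0 1) = 3 := by
  have h : (√2 * √π) ≠ 0 := by positivity
  rw [gauss_moment, gv4, ← mul_assoc, mul_comm _ (3:ℝ), mul_assoc, inv_mul_cancel₀ h, mul_one]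

/-- FG-A variance bound: with `e_k^2 ≤ β` and `|c| ≤ C`, the estimation variance
`Var[(∑_k e_k u_k) u_i c]` is bounded above by `(1 + n₁) β C²`. -/
theorem fga_variance_bound
    {Ω : Type*} [MeasurableSpace Ω] {μ : Measure Ω} [IsProbabilityMeasure μ]
    {n₁ : ℕ} (e : Fin n₁ → ℝ) (c : ℝ) (β C : ℝ)
    (hb : ∀ k, e k ^ 2 ≤ β) (hc : |c| ≤ C)
    (u : Fin n₁ → Ω → ℝ)
    (hmeas : ∀ i, Measurable (u i))
    (hindep : iIndepFun u μ)
    (hgauss : ∀ i, Measure.map (u i) μ = gaussianReal 0 1) :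
    ∀ i, variance (fun ω => (∑ k, e k * u k ω) * u i ω * c) μ
      ≤ (1 + n₁) * β * C ^ 2 := by
  intro i
  have hmu : ∀ j, AEMeasurable (u j) μ := fun j => (hmeas j).aemeasurable
  -- integrability of powers
  have Iu : ∀ (j : Fin n₁) (m : ℕ), Integrable (fun ω => u j ω ^ m) μ := by
    intro j m
    have h2 := gauss_integrable_pow m
    rw [← hgauss j] at h2
    have h3 := (integrable_map_measure
      ((by fun_prop : Measurable fun x : ℝ => x ^ m).aestronglyMeasurable) (hmu j)).mp h2
    exact h3
  have IuA : ∀ j : Fin n₁, Integrable (u j) μ := fun j => by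
    simpa [pow_one] using Iu j 1
  -- moment values
  have Eval : ∀ (j : Fin n₁) (m : ℕ),
      ∫ ω, u j ω ^ m ∂μ = ∫ x, x ^ m ∂(gaussianReal 0 1) := by
    intro j m
    rw [← hgauss j,
      integral_map (hmu j) ((by fun_prop : Measurable fun x : ℝ => x ^ m).aestronglyMeasurable)]
  have Eu1 : ∀ j : Fin n₁, ∫ ω, u j ω ∂μ = 0 := by
    intro j
    have h := Eval j 1
    rw [gm1] at h
    simpa [pow_one] using h
  have Eu2 : ∀ j : Fin n₁, ∫ ω, u j ω ^ 2 ∂μ = 1 := fun j => by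
    have h := Eval j 2; rwa [gm2] at h
  have Eu3 : ∀ j : Fin n₁, ∫ ω, u j ω ^ 3 ∂μ = 0 := fun j => by
    have h := Eval j 3; rwa [gm3] at h
  have Eu4 : ∀ j : Fin n₁, ∫ ω, u j ω ^ 4 ∂μ = 3 := fun j => by
    have h := Eval j 4; rwa [gm4] at h
  -- pair products
  have hQ : ∀ k : Fin n₁, Integrable (fun ω => u k ω * u i ω) μ ∧
      (∫ ω, u k ω * u i ω ∂μ) = if k = i then 1 else 0 := by
    intro k
    by_cases hk : k = i
    · refine ⟨(Iu i 2).congr (ae_of_all _ fun ω => by rw [hk]; ring), ?_⟩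
      rw [if_pos hk, ← Eu2 i]
      exact integral_congr_ae (ae_of_all _ fun ω => by rw [hk]; ring)
    · have hI : IndepFun (u k) (u i) μ := hindep.indepFun hk
      refine ⟨hI.integrable_mul (IuA k) (IuA i), ?_⟩
      rw [if_neg hk,
        hI.integral_fun_mul_eq_mul_integral (hmeas k).aestronglyMeasurable (hmeas i).aestronglyMeasurable,
        Eu1 k, zero_mul]
  -- triple products
  have hP : ∀ k l : Fin n₁, Integrable (fun ω => u k ω * u l ω * u i ω ^ 2) μ ∧
      (∫ ω, u k ω * u l ω * u i ω ^ 2 ∂μ)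
        = if k = i then (if l = i then (3:ℝ) else 0)
          else if l = i then 0 else if l = k then 1 else 0 := by
    intro k l
    by_cases hk : k = i
    · by_cases hl : l = i
      · refine ⟨(Iu i 4).congr (ae_of_all _ fun ω => by rw [hk, hl]; ring), ?_⟩
        rw [if_pos hk, if_pos hl, ← Eu4 i]
        exact integral_congr_ae (ae_of_all _ fun ω => by rw [hk, hl]; ring)
      · have hI : IndepFun (u l) (fun ω => u i ω ^ 3) μ :=
          (hindep.indepFun hl).comp measurable_id (measurable_id.pow_const 3)
        constructor
        · refine (hI.integrable_mul (IuA l) (Iu i 3)).congr (ae_of_all _ fun ω => ?_)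
          show u l ω * u i ω ^ 3 = u k ω * u l ω * u i ω ^ 2
          rw [hk]; ring
        · rw [if_pos hk, if_neg hl]
          have e1 : (∫ ω, u k ω * u l ω * u i ω ^ 2 ∂μ)
              = ∫ ω, u l ω * u i ω ^ 3 ∂μ :=
            integral_congr_ae (ae_of_all _ fun ω => by rw [hk]; ring)
          rw [e1, hI.integral_fun_mul_eq_mul_integral (hmeas l).aestronglyMeasurable
            ((hmeas i).pow_const 3).aestronglyMeasurable, Eu1 l, zero_mul]
    · by_cases hl : l = i
      · have hI : IndepFun (u k) (fun ω => u i ω ^ 3) μ :=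
          (hindep.indepFun hk).comp measurable_id (measurable_id.pow_const 3)
        constructor
        · refine (hI.integrable_mul (IuA k) (Iu i 3)).congr (ae_of_all _ fun ω => ?_)
          show u k ω * u i ω ^ 3 = u k ω * u l ω * u i ω ^ 2
          rw [hl]; ring
        · rw [if_neg hk, if_pos hl]
          have e1 : (∫ ω, u k ω * u l ω * u i ω ^ 2 ∂μ)
              = ∫ ω, u k ω * u i ω ^ 3 ∂μ :=
            integral_congr_ae (ae_of_all _ fun ω => by rw [hl]; ring)
          rw [e1, hI.integral_fun_mul_eq_mul_integral (hmeas k).aestronglyMeasurable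
            ((hmeas i).pow_const 3).aestronglyMeasurable, Eu1 k, zero_mul]
      · by_cases hlk : l = k
        · have hI : IndepFun (fun ω => u k ω ^ 2) (fun ω => u i ω ^ 2) μ :=
            (hindep.indepFun hk).comp (measurable_id.pow_const 2)
              (measurable_id.pow_const 2)
          constructor
          · refine (hI.integrable_mul (Iu k 2) (Iu i 2)).congr (ae_of_all _ fun ω => ?_)
            show u k ω ^ 2 * u i ω ^ 2 = u k ω * u l ω * u i ω ^ 2
            rw [hlk]; ring
          · rw [if_neg hk, if_neg hl, if_pos hlk]
            have e1 : (∫ ω, u k ω * u l ω * u i ω ^ 2 ∂μ)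
                = ∫ ω, u k ω ^ 2 * u i ω ^ 2 ∂μ :=
              integral_congr_ae (ae_of_all _ fun ω => by rw [hlk]; ring)
            rw [e1, hI.integral_fun_mul_eq_mul_integral ((hmeas k).pow_const 2).aestronglyMeasurable
              ((hmeas i).pow_const 2).aestronglyMeasurable, Eu2 k, Eu2 i, one_mul]
        · have hkl : k ≠ l := fun h => hlk h.symm
          have hI : IndepFun (fun ω => u k ω * u l ω) (fun ω => u i ω ^ 2) μ :=
            (hindep.indepFun_prodMk hmeas k l i hk hl).comp
              (measurable_fst.mul measurable_snd) (measurable_id.pow_const 2)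
          have hkl' : IndepFun (u k) (u l) μ := hindep.indepFun hkl
          have hklint : Integrable (fun ω => u k ω * u l ω) μ :=
            hkl'.integrable_mul (IuA k) (IuA l)
          constructor
          · exact hI.integrable_mul hklint (Iu i 2)
          · rw [if_neg hk, if_neg hl, if_neg hlk,
              hI.integral_fun_mul_eq_mul_integral ((hmeas k).mul (hmeas l)).aestronglyMeasurable
                ((hmeas i).pow_const 2).aestronglyMeasurable,
              hkl'.integral_fun_mul_eq_mul_integral (hmeas k).aestronglyMeasurable
                (hmeas l).aestronglyMeasurable, Eu1 k, zero_mul, zero_mul]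
  -- the random variable
  set X : Ω → ℝ := fun ω => (∑ k, e k * u k ω) * u i ω * c with hXdef
  have hSmeas : Measurable (fun ω => ∑ k, e k * u k ω) :=
    Finset.measurable_sum _ fun k _ => (hmeas k).const_mul (e k)
  have hXmeas : Measurable X := (hSmeas.mul (hmeas i)).mul_const c
  have h1 : ∀ ω, X ω = (∑ k, e k * (u k ω * u i ω)) * c := by
    intro ω
    rw [hXdef]
    show (∑ k, e k * u k ω) * u i ω * c = _
    rw [Finset.sum_mul]
    congr 1
    exact Finset.sum_congr rfl fun k _ => by ring
  have hXsq : ∀ ω, X ω ^ 2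
      = ∑ k, ∑ l, (e k * e l * c ^ 2) * (u k ω * u l ω * u i ω ^ 2) := by
    intro ω
    rw [hXdef]
    show ((∑ k, e k * u k ω) * u i ω * c) ^ 2 = _
    rw [mul_pow, mul_pow, sq (∑ k, e k * u k ω), Finset.sum_mul_sum, Finset.sum_mul,
      Finset.sum_mul]
    refine Finset.sum_congr rfl fun k _ => ?_
    rw [Finset.sum_mul, Finset.sum_mul]
    exact Finset.sum_congr rfl fun l _ => by ring
  have hXint : Integrable X μ := by
    have : X = fun ω => (∑ k, e k * (u k ω * u i ω)) * c := funext h1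
    rw [this]
    exact (integrable_finset_sum _ fun k _ => ((hQ k).1.const_mul (e k))).mul_const c
  have hXsqint : Integrable (fun ω => X ω ^ 2) μ := by
    have : (fun ω => X ω ^ 2)
        = fun ω => ∑ k, ∑ l, (e k * e l * c ^ 2) * (u k ω * u l ω * u i ω ^ 2) :=
      funext hXsq
    rw [this]
    exact integrable_finset_sum _ fun k _ =>
      integrable_finset_sum _ fun l _ => ((hP k l).1.const_mul _)
  -- expectation
  have hEX : ∫ ω, X ω ∂μ = e i * c := by
    have : (fun ω => X ω) = fun ω => (∑ k, e k * (u k ω * u i ω)) * c := funext h1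
    rw [this, integral_mul_const,
      integral_finset_sum _ (fun k _ => ((hQ k).1.const_mul (e k)))]
    have : ∀ k : Fin n₁, (∫ ω, e k * (u k ω * u i ω) ∂μ)
        = e k * if k = i then 1 else 0 := fun k => by
      rw [integral_const_mul, (hQ k).2]
    rw [Finset.sum_congr rfl fun k _ => this k]
    simp [Finset.sum_ite_eq', mul_ite]
  -- second moment
  have hEX2 : ∫ ω, X ω ^ 2 ∂μ
      = ∑ k, ∑ l, (e k * e l * c ^ 2) *
          (if k = i then (if l = i then (3:ℝ) else 0)
            else if l = i then 0 else if l = k then 1 else 0) := by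
    have h2 : (fun ω => X ω ^ 2)
        = fun ω => ∑ k, ∑ l, (e k * e l * c ^ 2) * (u k ω * u l ω * u i ω ^ 2) :=
      funext hXsq
    rw [h2, integral_finset_sum _ (fun k _ =>
      integrable_finset_sum _ fun l _ => ((hP k l).1.const_mul _))]
    refine Finset.sum_congr rfl fun k _ => ?_
    rw [integral_finset_sum _ (fun l _ => ((hP k l).1.const_mul _))]
    refine Finset.sum_congr rfl fun l _ => ?_
    rw [integral_const_mul, (hP k l).2]
  -- evaluate the double sum
  have hsum : (∑ k, ∑ l, (e k * e l * c ^ 2) *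
        (if k = i then (if l = i then (3:ℝ) else 0)
          else if l = i then 0 else if l = k then 1 else 0))
      = c ^ 2 * (2 * e i ^ 2 + ∑ k, e k ^ 2) := by
    have hinner : ∀ k : Fin n₁, (∑ l, (e k * e l * c ^ 2) *
        (if k = i then (if l = i then (3:ℝ) else 0)
          else if l = i then 0 else if l = k then 1 else 0))
        = if k = i then 3 * e i ^ 2 * c ^ 2 else e k ^ 2 * c ^ 2 := by
      intro k
      by_cases hk : k = i
      · have step : ∀ l : Fin n₁, (e k * e l * c ^ 2) *
            (if k = i then (if l = i then (3:ℝ) else 0)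
              else if l = i then 0 else if l = k then 1 else 0)
            = if l = i then e i * e l * c ^ 2 * 3 else 0 := by
          intro l
          by_cases hl : l = i <;> simp [hk, hl]
        rw [Finset.sum_congr rfl fun l _ => step l,
          Finset.sum_ite_eq' Finset.univ i fun l => e i * e l * c ^ 2 * 3,
          if_pos hk]
        simp only [Finset.mem_univ, ite_true]
        ring
      · have step : ∀ l : Fin n₁, (e k * e l * c ^ 2) *
            (if k = i then (if l = i then (3:ℝ) else 0)
              else if l = i then 0 else if l = k then 1 else 0)
            = if l = k then e k * e l * c ^ 2 else 0 := by
          intro l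
          rw [if_neg hk]
          by_cases hl : l = i
          · rw [if_pos hl, mul_zero, if_neg (fun h : l = k => hk (by rw [← h]; exact hl))]
          · rw [if_neg hl]
            by_cases hlk : l = k
            · rw [if_pos hlk, if_pos hlk, mul_one]
            · rw [if_neg hlk, if_neg hlk, mul_zero]
        rw [Finset.sum_congr rfl fun l _ => step l,
          Finset.sum_ite_eq' Finset.univ k fun l => e k * e l * c ^ 2,
          if_neg hk]
        simp only [Finset.mem_univ, ite_true]
        ring
    rw [Finset.sum_congr rfl fun k _ => hinner k]
    have split : ∀ k : Fin n₁, (if k = i then 3 * e i ^ 2 * c ^ 2 else e k ^ 2 * c ^ 2)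
        = e k ^ 2 * c ^ 2 + (if k = i then 2 * e i ^ 2 * c ^ 2 else 0) := by
      intro k
      by_cases hk : k = i
      · rw [if_pos hk, if_pos hk, hk]; ring
      · rw [if_neg hk, if_neg hk, add_zero]
    rw [Finset.sum_congr rfl fun k _ => split k, Finset.sum_add_distrib,
      Finset.sum_ite_eq' Finset.univ i fun _ => 2 * e i ^ 2 * c ^ 2]
    simp only [Finset.mem_univ, ite_true]
    rw [← Finset.sum_mul]
    ring
  -- variance
  have hmem : MemLp X 2 μ :=
    (memLp_two_iff_integrable_sq hXmeas.aestronglyMeasurable).mpr hXsqint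
  have hvar := variance_eq_sub hmem
  have hvpow : μ[X ^ 2] = ∫ ω, X ω ^ 2 ∂μ := rfl
  have hvX : μ[X] = ∫ ω, X ω ∂μ := rfl
  rw [hvpow, hvX, hEX2, hsum, hEX] at hvar
  -- final bound
  have hβ0 : 0 ≤ β := le_trans (sq_nonneg (e i)) (hb i)
  have hC0 : 0 ≤ C := le_trans (abs_nonneg c) hc
  have hc2 : c ^ 2 ≤ C ^ 2 := by
    rw [← sq_abs c]
    exact pow_le_pow_left₀ (abs_nonneg c) hc 2
  have hsumb : ∑ k, e k ^ 2 ≤ n₁ * β := by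
    calc ∑ k, e k ^ 2 ≤ ∑ _k : Fin n₁, β := Finset.sum_le_sum fun k _ => hb k
    _ = n₁ * β := by
      rw [Finset.sum_const, Finset.card_univ, Fintype.card_fin, nsmul_eq_mul]
  have hkey : c ^ 2 * (e i ^ 2 + ∑ k, e k ^ 2) ≤ C ^ 2 * ((1 + n₁) * β) := by
    refine mul_le_mul hc2 ?_ ?_ (by positivity)
    · have := hb i
      linarith
    · positivity
  have hsnn : 0 ≤ e i ^ 2 + ∑ k, e k ^ 2 := by positivity
  rw [hvar]
  nlinarith [hkey]
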